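/- Let (Ω, C) be a regular two-graph with parameters (n, a, b), let Γ ⊆ Ω be a maximal incoherent subset with |Γ| = g, and fix α ∈ Γ. Writing S_{γα} = {δ ∈ Ω : {γ, α, δ} ∈ C}, the following identities hold: (1) Σ_{γ ∈ Ω∖Γ} |Γ ∖ S_{γα}| = (n − g − a)·g + a; (2) Σ_{γ ∈ Ω∖Γ} |Γ ∩ S_{γα}| = a·(g − 1); (3) 2·Σ_{γ ∈ Ω∖Γ} |Γ ∖ S_{γα}|² = (2(n − g) − 3a)·g² + 3a·g; (4) 2·Σ_{γ ∈ Ω∖Γ} |Γ ∩ S_{γα}|² = a·g·(g − 1); and moreover for any β ∈ Γ with β ≠ α: (5) 2·Σ_{γ ∈ S_{αβ}} |Γ ∖ S_{γα}| = a·g and 2·Σ_{γ ∈ S_{αβ}} |Γ ∩ S_{γα}| = a·g; (6) Σ_{γ ∈ Ω∖(Γ ∪ S_{αβ})} |Γ ∖ S_{γα}| = (n − g − 3a/2)·g + a, i.e. 2·Σ_{γ ∈ Ω∖(Γ ∪ S_{αβ})} |Γ ∖ S_{γα}| = (2(n − g) − 3a)·g + 2a; (7) 2·Σ_{γ ∈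 Ω∖(Γ ∪ S_{αβ})} |Γ ∩ S_{γα}| = a·(g − 2). -/

import Mathlib

open Finset

/-- The set `S_{xy} = {z : {x,y,z} ∈ C}` associated to a two-graph `(Ω, C)`. -/
def Sset {Ω : Type*} [Fintype Ω] [DecidableEq Ω] (C : Finset (Finset Ω)) (x y : Ω) :
    Finset Ω :=
  univ.filter fun z => ({x, y, z} : Finset Ω) ∈ C

/-!
Since `β ∈ S_{γα}` iff `γ ∈ S_{αβ}`, double counting turns the sums over `γ` into sums of
`|S_{αβ}|` and `|S_{αβ} ∩ S_{αβ'}|` over `β, β' ∈ Γ`. For `β ≠ β'` in `Γ \ {α}` the triple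
`{α, β, β'}` is incoherent, so the parity condition on the 4-sets `{α, β, β', γ}` makes `S_{ββ'}`
the symmetric difference of `S_{αβ}` and `S_{αβ'}`; as all three have `a` elements,
`2 |S_{αβ} ∩ S_{αβ'}| = a`. Incoherence also puts every `S_{αβ}` outside `Γ`, and the sums of
`|Γ \ S_{γα}|` follow from `|Γ \ S_{γα}| = g - |Γ ∩ S_{γα}|`.
-/

open scoped symmDiff

namespace Finset

variable {ι κ : Type*}

theorem powersetCard_eq_image_erase [DecidableEq ι] {s : Finset ι} {k : ℕ} (hs : #s = k + 1) :
    s.powersetCard k = s.image s.erase := by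
  ext t
  simp only [mem_powersetCard, mem_image, ← covBy_iff_exists_erase, covBy_iff_card_sdiff_eq_one]
  refine and_congr_right fun hts => ?_
  have := card_le_card hts
  rw [card_sdiff_of_subset hts]
  omega

theorem card_filter_powersetCard_eq_card_filter_erase [DecidableEq ι] {s : Finset ι} {k : ℕ}
    (hs : #s = k + 1) (p : Finset ι → Prop) [DecidablePred p] :
    #{t ∈ s.powersetCard k | p t} = #{i ∈ s | p (s.erase i)} := by
  rw [powersetCard_eq_image_erase hs, filter_image,
    card_image_of_injOn (s.erase_injOn.mono (filter_subset _ _))]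

theorem card_symmDiff_add_two_mul_card_inter [DecidableEq ι] (s t : Finset ι) :
    #(s ∆ t) + 2 * #(s ∩ t) = #s + #t := by
  have hsub : s ∩ t ⊆ s ∪ t := inter_subset_union
  rw [symmDiff_eq_sup_sdiff_inf, sup_eq_union, inf_eq_inter, card_sdiff_of_subset hsub,
    ← card_union_add_card_inter]
  have := card_le_card hsub
  omega

theorem sum_sq_card_filter (s : Finset ι) (t : Finset κ) (r : ι → κ → Prop)
    [∀ i j, Decidable (r i j)] :
    ∑ i ∈ s, #{j ∈ t | r i j} ^ 2 = ∑ j ∈ t, ∑ j' ∈ t, #{i ∈ s | r i j ∧ r i j'} := by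
  have h := sum_card_bipartiteAbove_eq_sum_card_bipartiteBelow (s := s) (t := t ×ˢ t)
    (r := fun i p => r i p.1 ∧ r i p.2)
  simp only [bipartiteAbove, bipartiteBelow, filter_product, card_product, ← sq] at h
  rw [h, sum_product]

theorem sum_eq_mul_card_sub_one {R : Type*} [CommRing R] [DecidableEq ι] {s : Finset ι} {i : ι}
    (hi : i ∈ s) {f : ι → R} {c : R} (h0 : f i = 0) (hc : ∀ j ∈ s, j ≠ i → f j = c) :
    ∑ j ∈ s, f j = c * (#s - 1) := by
  rw [← sum_erase s h0, sum_congr rfl fun j hj => hc j (mem_of_mem_erase hj) (ne_of_mem_erase hj),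
    sum_const, nsmul_eq_mul, ← card_erase_add_one hi]
  push_cast
  ring

end Finset

section TwoGraph

variable {Ω : Type*}

def IsIncoherent (C : Finset (Finset Ω)) (Γ : Finset Ω) : Prop :=
  ∀ t ⊆ Γ, #t = 3 → t ∉ C

variable [DecidableEq Ω]

structure IsTwoGraph (C : Finset (Finset Ω)) : Prop where
  card_eq_three : ∀ c ∈ C, #c = 3
  even_card_triples : ∀ Q : Finset Ω, #Q = 4 → Even #{t ∈ Q.powersetCard 3 | t ∈ C}

def IsPairRegular (C : Finset (Finset Ω)) (a : ℕ) : Prop :=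
  ∀ p : Finset Ω, #p = 2 → #{c ∈ C | p ⊆ c} = a

namespace IsTwoGraph

variable {C : Finset (Finset Ω)}

theorem pair_notMem (hC : IsTwoGraph C) (x y : Ω) : {x, y} ∉ C := fun h => by
  have := hC.card_eq_three _ h
  have := card_le_two (a := x) (b := y)
  omega

theorem ne_of_mem (hC : IsTwoGraph C) {x y z : Ω} (h : {x, y, z} ∈ C) :
    x ≠ y ∧ x ≠ z ∧ y ≠ z := by
  refine ⟨?_, ?_, ?_⟩ <;> rintro rfl <;> simp [hC.pair_notMem] at h

theorem mem_iff_mem_iff_mem_iff_mem (hC : IsTwoGraph C) {x y z w : Ω} (hxy : x ≠ y) (hxz : x ≠ z)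
    (hxw : x ≠ w) (hyz : y ≠ z) (hyw : y ≠ w) (hzw : z ≠ w) :
    ({x, y, z} ∈ C ↔ {x, y, w} ∈ C) ↔ ({x, z, w} ∈ C ↔ {y, z, w} ∈ C) := by
  have h4 : #({x, y, z, w} : Finset Ω) = 4 := by simp [*]
  have heven := hC.even_card_triples _ h4
  rw [card_filter_powersetCard_eq_card_filter_erase h4, card_filter, sum_insert (by simp [*]),
    sum_insert (by simp [*]), sum_insert (by simp [*]), sum_singleton] at heven
  simp only [erase_insert_eq_erase, mem_insert, mem_singleton, or_self, not_false_eq_true,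
    erase_eq_of_notMem, ne_eq, erase_insert_of_ne, erase_singleton, insert_empty_eq, hxy, hxz, hxw,
    hyz, hyw, hzw] at heven
  split_ifs at heven <;> simp_all [Nat.even_iff]

end IsTwoGraph

variable [Fintype Ω]

theorem mem_Sset (C : Finset (Finset Ω)) {x y z : Ω} : z ∈ Sset C x y ↔ {x, y, z} ∈ C := by
  simp [Sset]

theorem mem_Sset_rotate (C : Finset (Finset Ω)) {x y z : Ω} : z ∈ Sset C x y ↔ x ∈ Sset C y z := by
  rw [mem_Sset, mem_Sset, insert_comm, pair_comm]

theorem sum_card_inter_Sset (C : Finset (Finset Ω)) (Γ T : Finset Ω) (α : Ω) :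
    ∑ γ ∈ T, #(Γ ∩ Sset C γ α) = ∑ β ∈ Γ, #(T ∩ Sset C α β) := by
  simp only [← filter_mem_eq_inter, mem_Sset_rotate C (x := _) (y := α)]
  exact sum_card_bipartiteAbove_eq_sum_card_bipartiteBelow _

theorem sum_sq_card_inter_Sset (C : Finset (Finset Ω)) (Γ T : Finset Ω) (α : Ω) :
    ∑ γ ∈ T, #(Γ ∩ Sset C γ α) ^ 2 =
      ∑ β ∈ Γ, ∑ β' ∈ Γ, #(T ∩ (Sset C α β ∩ Sset C α β')) := by
  simp only [← filter_mem_eq_inter, mem_Sset_rotate C (x := _) (y := α), mem_filter]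
  exact sum_sq_card_filter T Γ fun γ β => γ ∈ Sset C α β

namespace IsTwoGraph

variable {C : Finset (Finset Ω)}

theorem Sset_self (hC : IsTwoGraph C) (x : Ω) : Sset C x x = ∅ :=
  eq_empty_of_forall_notMem fun _ h => (hC.ne_of_mem ((mem_Sset C).1 h)).1 rfl

theorem card_Sset (hC : IsTwoGraph C) {a : ℕ} (ha : IsPairRegular C a) {x y : Ω} (hxy : x ≠ y) :
    #(Sset C x y) = a := by
  rw [← ha {x, y} (card_pair hxy)]
  refine card_nbij (fun z => {x, y, z}) (fun z hz => ?_) (fun z₁ hz₁ z₂ _ h => ?_) fun c hc => ?_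
  · rw [mem_coe, mem_filter, ← mem_Sset]
    exact ⟨hz, insert_subset_insert _ (singleton_subset_iff.2 (mem_insert_self _ _))⟩
  · obtain ⟨hxz₁, hyz₁⟩ := (hC.ne_of_mem ((mem_Sset C).1 hz₁)).2
    have : z₁ ∈ ({x, y, z₂} : Finset Ω) := by simp only at h; simp [← h]
    simpa [hxz₁.symm, hyz₁.symm] using this
  · rw [mem_coe, mem_filter] at hc
    obtain ⟨z, hz⟩ := card_eq_one.1 <| by
      rw [card_sdiff_of_subset hc.2, hC.card_eq_three _ hc.1, card_pair hxy]
    have hc' : c = {x, y, z} := by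
      rw [← union_sdiff_of_subset hc.2, hz]
      ext; simp
    exact ⟨z, (mem_Sset C).2 (hc' ▸ hc.1), hc'.symm⟩

theorem Sset_eq_symmDiff (hC : IsTwoGraph C) {x y z : Ω} (hxy : x ≠ y) (hxz : x ≠ z)
    (hyz : y ≠ z) (hxyz : {x, y, z} ∉ C) : Sset C y z = Sset C x y ∆ Sset C x z := by
  ext w
  rw [mem_symmDiff, mem_Sset, mem_Sset, mem_Sset]
  by_cases hw : w = x ∨ w = y ∨ w = z
  · rcases hw with rfl | rfl | rfl
    · rw [insert_comm, pair_comm] at hxyz; simp [hC.pair_notMem, hxyz]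
    · rw [pair_comm] at hxyz; simp [hC.pair_notMem, hxyz]
    · simp [hC.pair_notMem, hxyz]
  push Not at hw
  have := hC.mem_iff_mem_iff_mem_iff_mem hxy hxz hw.1.symm hyz hw.2.1.symm hw.2.2.symm
  simp only [hxyz, false_iff] at this
  tauto

theorem two_mul_card_Sset_inter (hC : IsTwoGraph C) {a : ℕ} (ha : IsPairRegular C a) {x y z : Ω}
    (hxy : x ≠ y) (hxz : x ≠ z) (hyz : y ≠ z) (hxyz : {x, y, z} ∉ C) :
    2 * #(Sset C x y ∩ Sset C x z) = a := by
  have h := card_symmDiff_add_two_mul_card_inter (Sset C x y) (Sset C x z)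
  rw [← hC.Sset_eq_symmDiff hxy hxz hyz hxyz, hC.card_Sset ha hxy, hC.card_Sset ha hxz,
    hC.card_Sset ha hyz] at h
  omega

end IsTwoGraph

namespace IsIncoherent

variable {C : Finset (Finset Ω)} {Γ : Finset Ω} {α β : Ω}

theorem Sset_subset_univ_sdiff (hΓ : IsIncoherent C Γ) (hC : IsTwoGraph C) (hα : α ∈ Γ)
    (hβ : β ∈ Γ) :
    Sset C α β ⊆ univ \ Γ := fun γ hγ => by
  rw [mem_Sset] at hγ
  refine mem_sdiff.2 ⟨mem_univ γ, fun hγΓ => hΓ _ ?_ (hC.card_eq_three _ hγ) hγ⟩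
  simp [insert_subset_iff, hα, hβ, hγΓ]

theorem sum_card_inter_Sset_compl (hΓ : IsIncoherent C Γ) (hC : IsTwoGraph C) {a : ℕ}
    (ha : IsPairRegular C a) (hα : α ∈ Γ) :
    ∑ γ ∈ univ \ Γ, (#(Γ ∩ Sset C γ α) : ℤ) = a * (#Γ - 1) := by
  rw [← Nat.cast_sum, sum_card_inter_Sset, Nat.cast_sum]
  refine sum_eq_mul_card_sub_one hα (by simp [hC.Sset_self]) fun β hβ hβα => ?_
  rw [inter_eq_right.2 (hΓ.Sset_subset_univ_sdiff hC hα hβ), hC.card_Sset ha (Ne.symm hβα)]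

theorem sum_two_mul_card_Sset_inter (hΓ : IsIncoherent C Γ) (hC : IsTwoGraph C) {a : ℕ}
    (ha : IsPairRegular C a) (hα : α ∈ Γ) (hβ : β ∈ Γ) (hβα : β ≠ α) :
    ∑ β' ∈ Γ, (2 * #(Sset C α β ∩ Sset C α β') : ℤ) = a * #Γ := by
  have hterm : ∀ β' ∈ Γ, (2 * #(Sset C α β ∩ Sset C α β') : ℤ) =
      a + (if β' = β then (a : ℤ) else 0) - (if β' = α then (a : ℤ) else 0) := by
    intro β' hβ'
    by_cases h'α : β' = α
    · simp [h'α, hC.Sset_self, hβα.symm]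
    by_cases h'β : β' = β
    · simp only [h'β, inter_self, hC.card_Sset ha (Ne.symm hβα), ↓reduceIte, hβα, sub_zero]
      ring
    have hcoh : {α, β, β'} ∉ C := fun h =>
      hΓ _ (by simp [insert_subset_iff, hα, hβ, hβ']) (hC.card_eq_three _ h) h
    have := hC.two_mul_card_Sset_inter ha (Ne.symm hβα) (Ne.symm h'α) (Ne.symm h'β) hcoh
    simp only [h'β, ↓reduceIte, add_zero, h'α, sub_zero]
    exact_mod_cast this
  rw [sum_congr rfl hterm, sum_sub_distrib, sum_add_distrib, sum_ite_eq', sum_ite_eq',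
    if_pos hβ, if_pos hα, sum_const, nsmul_eq_mul]
  ring

theorem two_mul_sum_sq_card_inter_Sset_compl (hΓ : IsIncoherent C Γ) (hC : IsTwoGraph C) {a : ℕ}
    (ha : IsPairRegular C a) (hα : α ∈ Γ) :
    2 * ∑ γ ∈ univ \ Γ, (#(Γ ∩ Sset C γ α) : ℤ) ^ 2 = a * #Γ * (#Γ - 1) := by
  simp only [← Nat.cast_pow, ← Nat.cast_sum, sum_sq_card_inter_Sset]
  rw [Nat.cast_sum, mul_sum]
  refine sum_eq_mul_card_sub_one hα (by simp [hC.Sset_self]) fun β hβ hβα => ?_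
  rw [← hΓ.sum_two_mul_card_Sset_inter hC ha hα hβ hβα, Nat.cast_sum, mul_sum]
  refine sum_congr rfl fun β' _ => ?_
  rw [inter_eq_right.2 (inter_subset_left.trans (hΓ.Sset_subset_univ_sdiff hC hα hβ))]

theorem two_mul_sum_card_inter_Sset_Sset (hΓ : IsIncoherent C Γ) (hC : IsTwoGraph C) {a : ℕ}
    (ha : IsPairRegular C a) (hα : α ∈ Γ) (hβ : β ∈ Γ) (hβα : β ≠ α) :
    2 * ∑ γ ∈ Sset C α β, (#(Γ ∩ Sset C γ α) : ℤ) = a * #Γ := by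
  rw [← Nat.cast_sum, sum_card_inter_Sset, Nat.cast_sum, mul_sum,
    ← hΓ.sum_two_mul_card_Sset_inter hC ha hα hβ hβα]

end IsIncoherent

end TwoGraph

theorem stmt_7_general {Ω : Type*} [Fintype Ω] [DecidableEq Ω]
    (C : Finset (Finset Ω)) (n a : ℕ)
    (hC3 : ∀ c ∈ C, c.card = 3)
    (heven : ∀ Q : Finset Ω, Q.card = 4 →
      Even (((Q.powersetCard 3).filter (· ∈ C)).card))
    (hn : Fintype.card Ω = n)
    (ha : ∀ p : Finset Ω, p.card = 2 → (C.filter fun c => p ⊆ c).card = a)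
    (Γ : Finset Ω) (g : ℕ) (hg : Γ.card = g)
    (hinc : ∀ t ⊆ Γ, t.card = 3 → t ∉ C)
    (α : Ω) (hα : α ∈ Γ) :
    (∑ γ ∈ univ \ Γ, ((Γ \ Sset C γ α).card : ℤ) = ((n : ℤ) - g - a) * g + a) ∧
    (∑ γ ∈ univ \ Γ, ((Γ ∩ Sset C γ α).card : ℤ) = a * ((g : ℤ) - 1)) ∧
    (2 * ∑ γ ∈ univ \ Γ, ((Γ \ Sset C γ α).card : ℤ) ^ 2
      = (2 * ((n : ℤ) - g) - 3 * a) * g ^ 2 + 3 * a * g) ∧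
    (2 * ∑ γ ∈ univ \ Γ, ((Γ ∩ Sset C γ α).card : ℤ) ^ 2 = a * g * ((g : ℤ) - 1)) ∧
    (∀ β ∈ Γ, β ≠ α →
      (2 * ∑ γ ∈ Sset C α β, ((Γ \ Sset C γ α).card : ℤ) = a * g) ∧
      (2 * ∑ γ ∈ Sset C α β, ((Γ ∩ Sset C γ α).card : ℤ) = a * g) ∧
      (2 * ∑ γ ∈ univ \ (Γ ∪ Sset C α β), ((Γ \ Sset C γ α).card : ℤ)
        = (2 * ((n : ℤ) - g) - 3 * a) * g + 2 * a) ∧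
      (2 * ∑ γ ∈ univ \ (Γ ∪ Sset C α β), ((Γ ∩ Sset C γ α).card : ℤ)
        = a * ((g : ℤ) - 2))) := by
  subst hg hn
  have hC : IsTwoGraph C := ⟨hC3, heven⟩
  have hΓ : IsIncoherent C Γ := hinc
  have hsdiff (γ : Ω) : (#(Γ \ Sset C γ α) : ℤ) = #Γ - #(Γ ∩ Sset C γ α) := by
    rw [← card_sdiff_add_card_inter Γ (Sset C γ α)]
    push_cast
    ring
  have hcompl : (#(univ \ Γ) : ℤ) = Fintype.card Ω - #Γ := by
    rw [card_univ_sdiff, Nat.cast_sub (card_le_univ Γ)]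
  have h₁ := hΓ.sum_card_inter_Sset_compl hC ha hα
  have h₂ := hΓ.two_mul_sum_sq_card_inter_Sset_compl hC ha hα
  refine ⟨?_, by linear_combination h₁, ?_, by linear_combination h₂, fun β hβ hβα => ?_⟩
  · simp only [hsdiff, sum_sub_distrib, sum_const, nsmul_eq_mul, hcompl]
    linear_combination -h₁
  · simp only [hsdiff, sub_sq, sum_add_distrib, sum_sub_distrib, sum_const, nsmul_eq_mul, hcompl,
      ← mul_sum]
    linear_combination h₂ - 4 * (#Γ : ℤ) * h₁
  have h₃ := hΓ.two_mul_sum_card_inter_Sset_Sset hC ha hα hβ hβα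
  have hS := hC.card_Sset ha hβα.symm
  have hsplit (f : Ω → ℤ) : ∑ γ ∈ univ \ (Γ ∪ Sset C α β), f γ =
      ∑ γ ∈ univ \ Γ, f γ - ∑ γ ∈ Sset C α β, f γ := by
    rw [← sup_eq_union, ← sdiff_sdiff_left, sum_sdiff_eq_sub (hΓ.Sset_subset_univ_sdiff hC hα hβ)]
  simp only [hsplit, hsdiff, sum_sub_distrib, sum_const, nsmul_eq_mul, hcompl, hS]
  refine ⟨?_, h₃, ?_, ?_⟩
  · linear_combination -h₃
  · linear_combination -2 * h₁ + h₃
  · linear_combination 2 * h₁ - h₃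

/-- **Lemma 4.8 (Gillespie).** Counting identities for a maximal incoherent subset `Γ` of size
`g` in a regular two-graph with parameters `(n, a, b)`. -/
theorem stmt_7 {Ω : Type*} [Fintype Ω] [DecidableEq Ω]
    (C : Finset (Finset Ω)) (n a b : ℕ)
    (hC3 : ∀ c ∈ C, c.card = 3)
    (heven : ∀ Q : Finset Ω, Q.card = 4 →
      Even (((Q.powersetCard 3).filter (· ∈ C)).card))
    (hn : Fintype.card Ω = n)
    (ha : ∀ p : Finset Ω, p.card = 2 → (C.filter fun c => p ⊆ c).card = a)
    (hb : ∀ c ∈ C, (((univ : Finset Ω).powersetCard 4).filter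
      (fun Q => c ⊆ Q ∧ ∀ t ∈ Q.powersetCard 3, t ∈ C)).card = b)
    (Γ : Finset Ω) (g : ℕ) (hg : Γ.card = g)
    (hinc : ∀ t ⊆ Γ, t.card = 3 → t ∉ C)
    (hmax : ∀ γ : Ω, γ ∉ Γ → ∃ α ∈ Γ, ∃ β ∈ Γ, ({γ, α, β} : Finset Ω) ∈ C)
    (α : Ω) (hα : α ∈ Γ) :
    (∑ γ ∈ univ \ Γ, ((Γ \ Sset C γ α).card : ℤ) = ((n : ℤ) - g - a) * g + a) ∧
    (∑ γ ∈ univ \ Γ, ((Γ ∩ Sset C γ α).card : ℤ) = a * ((g : ℤ) - 1)) ∧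
    (2 * ∑ γ ∈ univ \ Γ, ((Γ \ Sset C γ α).card : ℤ) ^ 2
      = (2 * ((n : ℤ) - g) - 3 * a) * g ^ 2 + 3 * a * g) ∧
    (2 * ∑ γ ∈ univ \ Γ, ((Γ ∩ Sset C γ α).card : ℤ) ^ 2 = a * g * ((g : ℤ) - 1)) ∧
    (∀ β ∈ Γ, β ≠ α →
      (2 * ∑ γ ∈ Sset C α β, ((Γ \ Sset C γ α).card : ℤ) = a * g) ∧
      (2 * ∑ γ ∈ Sset C α β, ((Γ ∩ Sset C γ α).card : ℤ) = a * g) ∧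
      (2 * ∑ γ ∈ univ \ (Γ ∪ Sset C α β), ((Γ \ Sset C γ α).card : ℤ)
        = (2 * ((n : ℤ) - g) - 3 * a) * g + 2 * a) ∧
      (2 * ∑ γ ∈ univ \ (Γ ∪ Sset C α β), ((Γ ∩ Sset C γ α).card : ℤ)
        = a * ((g : ℤ) - 2))) :=
  stmt_7_general C n a hC3 heven hn ha Γ g hg hinc α hα
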